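/- arXiv:2307.16794 — 3 statements merged into one kernel-verified Lean document; each statement's English description precedes it below -/
import Mathlib

section
/- A piecewise almost linear curve C = [C_1 C_2 ··· C_k], where each lattice segment C_i goes from its start to a point displaced by (m_i, n_i), is ℤ-convex if and only if m_1/n_1 ≥ m_2/n_2 ≥ ··· ≥ m_k/n_k. -/
/-- The heights of the piecewise almost linear curve determined by a list of lattice segment
displacements `(m₁,n₁), ..., (m_k,n_k)`: `palG L x` is the largest integer weakly below the
curve at horizontal coordinate `x` (each segment passes just above the diagonal of its
bounding box). -/
def palG : List (ℕ × ℕ) → ℕ → ℕ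
  | [], _ => 0
  | p :: rest, x => if x ≤ p.1 then x * p.2 / p.1 else p.2 + palG rest (x - p.1)

/-- `palO L x = true` iff `(x, palG L x)` is a lattice point lying on the piecewise almost
linear curve (i.e. `x` is a partial sum of the `mᵢ`'s). -/
def palO : List (ℕ × ℕ) → ℕ → Bool
  | [], x => decide (x = 0)
  | p :: rest, x => if x < p.1 then decide (x = 0) else palO rest (x - p.1)

/-- The set of lattice points of `ℝ²`. -/
def latticePts : Set (ℝ × ℝ) := {p | ∃ a b : ℤ, p = ((a : ℝ), (b : ℝ))}

/-- A set `A ⊆ ℝ²` is `ℤ`-convex if `Conv(A) ∩ ℤ² = A ∩ ℤ²`. -/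
def ZConvexSet (A : Set (ℝ × ℝ)) : Prop :=
  convexHull ℝ A ∩ latticePts = A ∩ latticePts

/-- The set `A_C` for the piecewise almost linear curve given by `L`: the lattice points of
`[0,m] × [0,n]` strictly above the curve, together with the points `pᵢ + (-ε, ε)` for the
lattice points `pᵢ` on the curve. -/
def palACset (L : List (ℕ × ℕ)) (m n : ℕ) (ε : ℝ) : Set (ℝ × ℝ) :=
  {p | ∃ x y : ℕ, x ≤ m ∧ y ≤ n ∧ palG L x + 1 ≤ y ∧ p = ((x : ℝ), (y : ℝ))} ∪
  {p | ∃ x : ℕ, x ≤ m ∧ palO L x = true ∧ p = ((x : ℝ) - ε, (palG L x : ℝ) + ε)}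

def Sm (mn : ℕ → ℕ × ℕ) (j : ℕ) : ℕ := ∑ i ∈ Finset.range j, (mn i).1
def Tn (mn : ℕ → ℕ × ℕ) (j : ℕ) : ℕ := ∑ i ∈ Finset.range j, (mn i).2

lemma Sm_succ (mn : ℕ → ℕ × ℕ) (j : ℕ) : Sm mn (j+1) = Sm mn j + (mn j).1 :=
  Finset.sum_range_succ _ _
lemma Tn_succ (mn : ℕ → ℕ × ℕ) (j : ℕ) : Tn mn (j+1) = Tn mn j + (mn j).2 :=
  Finset.sum_range_succ _ _

lemma Sm_shift (mn : ℕ → ℕ × ℕ) (j : ℕ) :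
    Sm mn (j+1) = (mn 0).1 + Sm (fun i => mn (i+1)) j := by
  simpa [Sm, add_comm] using Finset.sum_range_succ' (fun i => (mn i).1) j

lemma Tn_shift (mn : ℕ → ℕ × ℕ) (j : ℕ) :
    Tn mn (j+1) = (mn 0).2 + Tn (fun i => mn (i+1)) j := by
  simpa [Tn, add_comm] using Finset.sum_range_succ' (fun i => (mn i).2) j

lemma Sm_mono (mn : ℕ → ℕ × ℕ) {j l : ℕ} (h : j ≤ l) : Sm mn j ≤ Sm mn l := by
  apply Finset.sum_le_sum_of_subset
  exact Finset.range_subset_range.2 h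

lemma Tn_mono (mn : ℕ → ℕ × ℕ) {j l : ℕ} (h : j ≤ l) : Tn mn j ≤ Tn mn l := by
  apply Finset.sum_le_sum_of_subset
  exact Finset.range_subset_range.2 h

lemma range_map_succ (mn : ℕ → ℕ × ℕ) (k : ℕ) :
    (List.range (k+1)).map mn = mn 0 :: (List.range k).map (fun i => mn (i+1)) := by
  rw [List.range_succ_eq_map, List.map_cons, List.map_map]
  rfl

lemma palG_eval (k : ℕ) (mn : ℕ → ℕ × ℕ) (hpos : ∀ i < k, 0 < (mn i).1 ∧ 0 < (mn i).2)
    (j : ℕ) (hj : j < k) (d : ℕ) (hd : d ≤ (mn j).1) :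
    palG ((List.range k).map mn) (Sm mn j + d) = Tn mn j + d * (mn j).2 / (mn j).1 := by
  induction k generalizing mn j with
  | zero => omega
  | succ k ih =>
    rw [range_map_succ]
    cases j with
    | zero =>
      simp only [Sm, Tn, Finset.range_zero, Finset.sum_empty, zero_add, palG, hd, if_pos]
    | succ j =>
      have hm0 : 0 < (mn 0).1 := (hpos 0 (Nat.succ_pos _)).1
      have hSm : (mn 0).1 ≤ Sm mn (j+1) := by
        have := Sm_shift mn j; omega
      have hx : Sm mn (j+1) + d ≤ (mn 0).1 ↔ (Sm mn (j+1) + d = (mn 0).1) := by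
        constructor
        · intro h; omega
        · intro h; omega
      by_cases hc : Sm mn (j+1) + d ≤ (mn 0).1
      · -- then Sm mn (j+1) = (mn 0).1 and d = 0, so j-sum beyond 0 is 0
        have h1 : Sm mn (j+1) = (mn 0).1 ∧ d = 0 := by omega
        -- Sm mn (j+1) = (mn 0).1 + Sm shifted j, so Sm shifted j = 0
        have h2 : Sm (fun i => mn (i+1)) j = 0 := by
          have := Sm_shift mn j; omega
        -- each (mn (i+1)).1 > 0 for i < j, so j = 0
        have hj0 : j = 0 := by
          by_contra hne
          have h3 : 0 < Sm (fun i => mn (i+1)) j := by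
            have : 0 < (mn 1).1 := (hpos 1 (by omega)).1
            calc 0 < (mn 1).1 := this
            _ ≤ Sm (fun i => mn (i+1)) j := by
              have : (mn 1).1 = Sm (fun i => mn (i+1)) 1 := by
                simp [Sm]
              rw [this]; exact Sm_mono _ (by omega)
          omega
        subst hj0
        simp only [palG, if_pos hc]
        rw [h1.1, h1.2, add_zero, Nat.mul_div_cancel_left _ hm0]
        simp [Tn_succ, Tn, Nat.zero_div]
      · simp only [palG, if_neg hc]
        have harg : Sm mn (j+1) + d - (mn 0).1 = Sm (fun i => mn (i+1)) j + d := by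
          have := Sm_shift mn j; omega
        rw [harg, ih (fun i => mn (i+1)) (fun i hi => hpos (i+1) (by omega)) j (by omega) hd]
        have := Tn_shift mn j
        omega

lemma palG_corner (k : ℕ) (hk : 0 < k) (mn : ℕ → ℕ × ℕ)
    (hpos : ∀ i < k, 0 < (mn i).1 ∧ 0 < (mn i).2) (j : ℕ) (hj : j ≤ k) :
    palG ((List.range k).map mn) (Sm mn j) = Tn mn j := by
  rcases Nat.lt_or_ge j k with h | h
  · have := palG_eval k mn hpos j h 0 (Nat.zero_le _)
    simpa using this
  · have hjk : j = k := le_antisymm hj h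
    obtain ⟨k', rfl⟩ : ∃ k', k = k' + 1 := ⟨k - 1, by omega⟩
    subst hjk
    have := palG_eval (k'+1) mn hpos k' (by omega) (mn k').1 le_rfl
    rw [← Sm_succ] at this
    rw [this, Nat.mul_div_cancel_left _ (hpos k' (by omega)).1, ← Tn_succ]

lemma palO_iff (k : ℕ) (mn : ℕ → ℕ × ℕ) (hpos : ∀ i < k, 0 < (mn i).1 ∧ 0 < (mn i).2)
    (x : ℕ) : palO ((List.range k).map mn) x = true ↔ ∃ j ≤ k, x = Sm mn j := by
  induction k generalizing mn x with
  | zero =>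
    simp only [List.range_zero, List.map_nil, palO]
    constructor
    · intro h; exact ⟨0, le_rfl, by simpa [Sm] using of_decide_eq_true h⟩
    · rintro ⟨j, hj, rfl⟩
      have : j = 0 := by omega
      subst this; simp [Sm]
  | succ k ih =>
    rw [range_map_succ]
    have hm0 : 0 < (mn 0).1 := (hpos 0 (Nat.succ_pos _)).1
    simp only [palO]
    by_cases hc : x < (mn 0).1
    · rw [if_pos hc]
      constructor
      · intro h
        exact ⟨0, Nat.zero_le _, by simpa [Sm] using of_decide_eq_true h⟩
      · rintro ⟨j, hj, rfl⟩
        cases j with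
        | zero => simp [Sm]
        | succ j =>
          exfalso
          have : (mn 0).1 ≤ Sm mn (j+1) := by have := Sm_shift mn j; omega
          omega
    · rw [if_neg hc]
      rw [ih (fun i => mn (i+1)) (fun i hi => hpos (i+1) (by omega)) (x - (mn 0).1)]
      constructor
      · rintro ⟨j, hj, hx⟩
        refine ⟨j+1, by omega, ?_⟩
        have := Sm_shift mn j; omega
      · rintro ⟨j, hj, rfl⟩
        cases j with
        | zero => exfalso; simp [Sm] at hc; omega
        | succ j =>
          refine ⟨j, by omega, ?_⟩
          have := Sm_shift mn j; omega

lemma decomp (k : ℕ) (hk : 0 < k) (mn : ℕ → ℕ × ℕ) (x : ℕ) (hx : x ≤ Sm mn k) :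
    ∃ j < k, ∃ d ≤ (mn j).1, x = Sm mn j + d := by
  induction k with
  | zero => omega
  | succ k ih =>
    rcases Nat.eq_zero_or_pos k with rfl | hk'
    · exact ⟨0, Nat.zero_lt_one, x, by simpa [Sm, Sm_succ] using hx, by simp [Sm]⟩
    · by_cases h : x ≤ Sm mn k
      · obtain ⟨j, hj, d, hd, hxd⟩ := ih hk' h
        exact ⟨j, by omega, d, hd, hxd⟩
      · refine ⟨k, by omega, x - Sm mn k, ?_, by omega⟩
        rw [Sm_succ] at hx; omega

section L2
variable (mn : ℕ → ℕ × ℕ)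

lemma slope_chain (k : ℕ)
    (hpos : ∀ i < k, 0 < (mn i).1 ∧ 0 < (mn i).2)
    (hsl : ∀ i : ℕ, i + 1 < k → (mn (i + 1)).1 * (mn i).2 ≤ (mn i).1 * (mn (i + 1)).2)
    {i j : ℕ} (hij : i ≤ j) (hj : j < k) :
    (mn i).2 * (mn j).1 ≤ (mn j).2 * (mn i).1 := by
  induction j, hij using Nat.le_induction with
  | base => rw [mul_comm]
  | succ j hij ih =>
    have h1 := ih (by omega)
    have h2 := hsl j (by omega)
    have hmj : 0 < (mn j).1 := (hpos j (by omega)).1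
    have hnj : 0 < (mn j).2 := (hpos j (by omega)).2
    have hm := Nat.mul_le_mul h1 h2
    have h3 : ((mn j).2 * (mn j).1) * ((mn i).2 * (mn (j+1)).1) ≤
        ((mn j).2 * (mn j).1) * ((mn (j+1)).2 * (mn i).1) := by
      calc ((mn j).2 * (mn j).1) * ((mn i).2 * (mn (j+1)).1)
          = ((mn i).2 * (mn j).1) * ((mn (j+1)).1 * (mn j).2) := by ring
        _ ≤ ((mn j).2 * (mn i).1) * ((mn j).1 * (mn (j+1)).2) := hm
        _ = ((mn j).2 * (mn j).1) * ((mn (j+1)).2 * (mn i).1) := by ring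
    exact Nat.le_of_mul_le_mul_left h3 (by positivity)

/-- f l = m_i * T l - n_i * S l is minimized at l = i. -/
lemma corner_min (k : ℕ)
    (hpos : ∀ i < k, 0 < (mn i).1 ∧ 0 < (mn i).2)
    (hsl : ∀ i : ℕ, i + 1 < k → (mn (i + 1)).1 * (mn i).2 ≤ (mn i).1 * (mn (i + 1)).2)
    {i : ℕ} (hi : i < k) {l : ℕ} (hl : l ≤ k) :
    ((mn i).1 : ℤ) * Tn mn i - (mn i).2 * Sm mn i ≤ (mn i).1 * Tn mn l - (mn i).2 * Sm mn l := by
  rcases Nat.le_total i l with h | h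
  · induction l, h using Nat.le_induction with
    | base => exact le_rfl
    | succ l hil ih =>
      have hstep : (mn i).2 * (mn l).1 ≤ (mn l).2 * (mn i).1 :=
        slope_chain mn k hpos hsl hil (by omega)
      have ih' := ih (by omega)
      have hc : ((mn i).2 * (mn l).1 : ℤ) ≤ (mn l).2 * (mn i).1 := by exact_mod_cast hstep
      rw [Sm_succ, Tn_succ]
      push_cast
      push_cast at hc
      linarith
  · have down : ∀ t, ∀ l', l' + t = i →
        ((mn i).1 : ℤ) * Tn mn i - (mn i).2 * Sm mn i ≤
          (mn i).1 * Tn mn l' - (mn i).2 * Sm mn l' := by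
      intro t
      induction t with
      | zero =>
        intro l' hl'
        have : l' = i := by omega
        subst this; exact le_rfl
      | succ t ih =>
        intro l' hl'
        have h1 := ih (l'+1) (by omega)
        have hstep : (mn l').2 * (mn i).1 ≤ (mn i).2 * (mn l').1 :=
          slope_chain mn k hpos hsl (by omega) hi
        have hc : ((mn l').2 * (mn i).1 : ℤ) ≤ ((mn i).2 : ℤ) * (mn l').1 := by
          exact_mod_cast hstep
        rw [Sm_succ, Tn_succ] at h1
        push_cast at h1 hc ⊢
        linarith
    exact down (i - l) l (by omega)
end L2

lemma div_mono' {m m' n n' : ℕ} (hm : 0 < m) (hm' : 0 < m') (h : n * m' ≤ n' * m) (d : ℕ) :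
    d * n / m ≤ d * n' / m' := by
  rw [Nat.le_div_iff_mul_le hm']
  have h1 : m * (d * n / m * m') ≤ d * n * m' := by
    calc m * (d * n / m * m') = (d * n / m * m) * m' := by ring
    _ ≤ d * n * m' := Nat.mul_le_mul_right _ (Nat.div_mul_le_self _ _)
  have h2 : d * n * m' ≤ d * n' * m := by
    calc d * n * m' = d * (n * m') := by ring
    _ ≤ d * (n' * m) := Nat.mul_le_mul_left _ h
    _ = d * n' * m := by ring
  have h3 : m * (d * n / m * m') ≤ m * (d * n') := by
    calc m * (d * n / m * m') ≤ d * n' * m := le_trans h1 h2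
    _ = m * (d * n') := by ring
  exact Nat.le_of_mul_le_mul_left h3 hm

lemma div_succ_ge {m n d : ℕ} (hm : 0 < m) : n * d + 1 ≤ m * (d * n / m + 1) := by
  have h := Nat.div_add_mod (d * n) m
  have h2 : d * n % m < m := Nat.mod_lt _ hm
  have h3 : m * (d * n / m + 1) = m * (d * n / m) + m := by ring
  have h4 : n * d = d * n := by ring
  linarith

lemma ceil_identity {m n d e : ℕ} (hm : 0 < m) (hde : d + e = m) :
    d * n / m + (n * e + (m - 1)) / m = n := by
  set q := d * n / m with hq
  set r := d * n % m with hr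
  have h1 : m * q + r = d * n := Nat.div_add_mod (d * n) m
  have hrm : r < m := Nat.mod_lt _ hm
  have hqn : q ≤ n := by
    have h5 : d * n ≤ m * n := Nat.mul_le_mul_right _ (by omega)
    have h6 := Nat.div_le_div_right (c := m) h5
    rw [← hq, Nat.mul_div_cancel_left _ hm] at h6
    exact h6
  set u := n - q with hu'
  have hu : q + u = n := by omega
  have h2 : n * e + d * n = m * n := by
    have : n * e + d * n = (d + e) * n := by ring
    rw [this, hde]
  have h3 : m * n = m * q + m * u := by rw [← hu]; ring
  have h4 : n * e + r = m * u := by linarith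
  obtain ⟨m', rfl⟩ : ∃ m', m = m' + 1 := ⟨m - 1, by omega⟩
  have h5 : n * e + (m' + 1 - 1) = (m' + 1) * u + (m' - r) := by
    have : n * e = (m' + 1) * u - r := by omega
    omega
  rw [h5, Nat.mul_add_div (by omega), Nat.div_eq_of_lt (by omega), add_zero]
  omega

lemma ceil_le {m w : ℕ} : m * (w / m) ≤ w := Nat.mul_div_le w m

lemma ceil_lb {m w : ℕ} (hm : 0 < m) : w + 1 ≤ m * (w / m) + m := by
  have h := Nat.div_add_mod w m
  have h2 : w % m < m := Nat.mod_lt _ hm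
  linarith

lemma ceil_mono {m m' n n' e : ℕ} (hm : 0 < m) (hm' : 0 < m') (h : n * m' ≤ n' * m) :
    (n * e + (m - 1)) / m ≤ (n' * e + (m' - 1)) / m' := by
  set c' := (n' * e + (m' - 1)) / m' with hc'
  have h1 : n' * e + (m' - 1) + 1 ≤ m' * c' + m' := ceil_lb hm'
  have h2 : n' * e ≤ m' * c' := by
    have : m' - 1 + 1 = m' := by omega
    linarith [this.symm.le, this.le]
  have h3 : n * e * m' ≤ m * c' * m' := by
    calc n * e * m' = (n * m') * e := by ring
    _ ≤ (n' * m) * e := Nat.mul_le_mul_right _ h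
    _ = (n' * e) * m := by ring
    _ ≤ (m' * c') * m := Nat.mul_le_mul_right _ h2
    _ = m * c' * m' := by ring
  have h4 : n * e ≤ m * c' := Nat.le_of_mul_le_mul_right h3 hm'
  rw [Nat.div_le_iff_le_mul_add_pred hm]
  exact Nat.add_le_add_right h4 _

/-- KEY integer lemma: lattice points above the curve satisfy every line constraint. -/
lemma key_int (mn : ℕ → ℕ × ℕ) (k : ℕ)
    (hpos : ∀ i < k, 0 < (mn i).1 ∧ 0 < (mn i).2)
    (hsl : ∀ i : ℕ, i + 1 < k → (mn (i + 1)).1 * (mn i).2 ≤ (mn i).1 * (mn (i + 1)).2)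
    {i j : ℕ} (hi : i < k) (hj : j < k) {d : ℕ} (hd : d ≤ (mn j).1) {y : ℕ}
    (hy : Tn mn j + d * (mn j).2 / (mn j).1 + 1 ≤ y) :
    ((mn i).2 : ℤ) * (Sm mn j + d) + ((mn i).1 * Tn mn i - (mn i).2 * Sm mn i) + 1 ≤
      (mn i).1 * y := by
  have hmi : 0 < (mn i).1 := (hpos i hi).1
  have hmj : 0 < (mn j).1 := (hpos j hj).1
  set q := d * (mn j).2 / (mn j).1 with hq
  have hy' : (mn i).1 * (Tn mn j + q + 1) ≤ (mn i).1 * y := Nat.mul_le_mul_left _ hy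
  have c1 : ((mn i).1 * (Tn mn j + q + 1) : ℤ) ≤ ((mn i).1 : ℤ) * y := by exact_mod_cast hy'
  rcases Nat.le_total i j with hij | hji
  · have hcor := corner_min mn k hpos hsl hi (l := j) (le_of_lt hj)
    have hchain : (mn i).2 * (mn j).1 ≤ (mn j).2 * (mn i).1 :=
      slope_chain mn k hpos hsl hij hj
    have hqi : d * (mn i).2 / (mn i).1 ≤ q := div_mono' hmi hmj hchain d
    have hfin : (mn i).2 * d + 1 ≤ (mn i).1 * (q + 1) := by
      calc (mn i).2 * d + 1 ≤ (mn i).1 * (d * (mn i).2 / (mn i).1 + 1) := div_succ_ge hmi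
      _ ≤ (mn i).1 * (q + 1) := Nat.mul_le_mul_left _ (by omega)
    have c2 : ((mn i).2 * d + 1 : ℤ) ≤ ((mn i).1 : ℤ) * (q + 1) := by exact_mod_cast hfin
    push_cast at c1 c2 ⊢
    linarith
  · have hj1 : j + 1 ≤ k := hj
    have hcor := corner_min mn k hpos hsl hi (l := j+1) hj1
    rw [Sm_succ, Tn_succ] at hcor
    set e := (mn j).1 - d with he
    have hde : d + e = (mn j).1 := by omega
    set cc := ((mn j).2 * e + ((mn j).1 - 1)) / (mn j).1 with hcc
    have hident : q + cc = (mn j).2 := ceil_identity hmj hde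
    have hchain : (mn j).2 * (mn i).1 ≤ (mn i).2 * (mn j).1 :=
      slope_chain mn k hpos hsl hji hi
    have hcm : cc ≤ ((mn i).2 * e + ((mn i).1 - 1)) / (mn i).1 := ceil_mono hmj hmi hchain
    have hcl : (mn i).1 * (((mn i).2 * e + ((mn i).1 - 1)) / (mn i).1) ≤
        (mn i).2 * e + ((mn i).1 - 1) := ceil_le
    have hccle : (mn i).1 * cc + 1 ≤ (mn i).2 * e + (mn i).1 := by
      have h5 : (mn i).1 * cc ≤ (mn i).2 * e + ((mn i).1 - 1) :=
        le_trans (Nat.mul_le_mul_left _ hcm) hcl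
      have h6 : (mn i).1 - 1 + 1 = (mn i).1 := by omega
      calc (mn i).1 * cc + 1 ≤ (mn i).2 * e + ((mn i).1 - 1) + 1 := Nat.add_le_add_right h5 _
      _ = (mn i).2 * e + (mn i).1 := by omega
    have c2 : ((mn i).1 * cc + 1 : ℤ) ≤ ((mn i).2 : ℤ) * e + (mn i).1 := by exact_mod_cast hccle
    have c3 : ((q : ℤ)) + cc = (mn j).2 := by exact_mod_cast hident
    have c4 : ((d : ℤ)) + e = (mn j).1 := by exact_mod_cast hde
    have c3' : ((mn i).1 : ℤ) * q + (mn i).1 * cc = (mn i).1 * (mn j).2 := by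
      linear_combination ((mn i).1 : ℤ) * c3
    have c4' : ((mn i).2 : ℤ) * d + (mn i).2 * e = (mn i).2 * (mn j).1 := by
      linear_combination ((mn i).2 : ℤ) * c4
    push_cast at c1 c2 hcor ⊢
    linarith
/-- The convex region bounded by the supporting lines of the curve. -/
def palK (mn : ℕ → ℕ × ℕ) (k : ℕ) (ε : ℝ) : Set (ℝ × ℝ) :=
  {p | -ε ≤ p.1 ∧ p.1 ≤ (Sm mn k : ℝ) ∧ p.2 ≤ (Tn mn k : ℝ) + ε ∧
    ∀ i < k, ((mn i).2 : ℝ) * p.1 +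
      (((mn i).1 : ℝ) * (Tn mn i : ℝ) - ((mn i).2 : ℝ) * (Sm mn i : ℝ)) +
      ε * (((mn i).1 : ℝ) + ((mn i).2 : ℝ)) ≤ ((mn i).1 : ℝ) * p.2}

lemma palK_convex (mn : ℕ → ℕ × ℕ) (k : ℕ) (ε : ℝ) : Convex ℝ (palK mn k ε) := by
  intro p hp q hq a b ha hb hab
  obtain ⟨hp1, hp2, hp3, hp4⟩ := hp
  obtain ⟨hq1, hq2, hq3, hq4⟩ := hq
  have hb' : b = 1 - a := by linarith
  have hfst : (a • p + b • q).1 = a * p.1 + b * q.1 := rfl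
  have hsnd : (a • p + b • q).2 = a * p.2 + b * q.2 := rfl
  refine ⟨?_, ?_, ?_, ?_⟩
  · rw [hfst]
    nlinarith [mul_le_mul_of_nonneg_left hp1 ha, mul_le_mul_of_nonneg_left hq1 hb]
  · rw [hfst]
    nlinarith [mul_le_mul_of_nonneg_left hp2 ha, mul_le_mul_of_nonneg_left hq2 hb]
  · rw [hsnd]
    nlinarith [mul_le_mul_of_nonneg_left hp3 ha, mul_le_mul_of_nonneg_left hq3 hb]
  · intro i hi
    rw [hfst, hsnd]
    have h1 := mul_le_mul_of_nonneg_left (hp4 i hi) ha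
    have h2 := mul_le_mul_of_nonneg_left (hq4 i hi) hb
    have h3 := add_le_add h1 h2
    subst hb'
    nlinarith [h3]

/-- A_C is contained in K for small ε. -/
lemma palA_sub_K (mn : ℕ → ℕ × ℕ) (k : ℕ) (hk : 0 < k)
    (hpos : ∀ i < k, 0 < (mn i).1 ∧ 0 < (mn i).2)
    (hsl : ∀ i : ℕ, i + 1 < k → (mn (i + 1)).1 * (mn i).2 ≤ (mn i).1 * (mn (i + 1)).2)
    (ε : ℝ) (hε : 0 < ε) (hε1 : ε * ((Sm mn k : ℝ) + (Tn mn k : ℝ)) ≤ 1) :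
    palACset ((List.range k).map mn) (Sm mn k) (Tn mn k) ε ⊆ palK mn k ε := by
  have hmn_le : ∀ i < k, ((mn i).1 : ℝ) + ((mn i).2 : ℝ) ≤ (Sm mn k : ℝ) + (Tn mn k : ℝ) := by
    intro i hi
    have h1 : (mn i).1 ≤ Sm mn k := by
      have := Sm_succ mn i
      have := Sm_mono mn (show i + 1 ≤ k by omega)
      omega
    have h2 : (mn i).2 ≤ Tn mn k := by
      have := Tn_succ mn i
      have := Tn_mono mn (show i + 1 ≤ k by omega)
      omega
    have c1 : ((mn i).1 : ℝ) ≤ (Sm mn k : ℝ) := by exact_mod_cast h1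
    have c2 : ((mn i).2 : ℝ) ≤ (Tn mn k : ℝ) := by exact_mod_cast h2
    linarith
  rintro p (⟨x, y, hx, hy, hgy, rfl⟩ | ⟨x, hx, ho, rfl⟩)
  · obtain ⟨j, hj, d, hd, rfl⟩ := decomp k hk mn x hx
    rw [palG_eval k mn hpos j hj d hd] at hgy
    refine ⟨?_, ?_, ?_, ?_⟩
    · show -ε ≤ ((Sm mn j + d : ℕ) : ℝ)
      have : (0:ℝ) ≤ ((Sm mn j + d : ℕ) : ℝ) := Nat.cast_nonneg _
      linarith
    · show ((Sm mn j + d : ℕ) : ℝ) ≤ (Sm mn k : ℝ)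
      exact_mod_cast hx
    · show (y : ℝ) ≤ (Tn mn k : ℝ) + ε
      have : (y : ℝ) ≤ (Tn mn k : ℝ) := by exact_mod_cast hy
      linarith
    · intro i hi
      have hki := key_int mn k hpos hsl hi hj hd hgy
      have hkir : ((mn i).2 : ℝ) * ((Sm mn j + d : ℕ) : ℝ) +
          (((mn i).1 : ℝ) * (Tn mn i : ℝ) - ((mn i).2 : ℝ) * (Sm mn i : ℝ)) + 1 ≤
          ((mn i).1 : ℝ) * (y : ℝ) := by exact_mod_cast hki
      have hεi : ε * (((mn i).1 : ℝ) + ((mn i).2 : ℝ)) ≤ 1 := by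
        have h5 := mul_le_mul_of_nonneg_left (hmn_le i hi) hε.le
        linarith
      show ((mn i).2 : ℝ) * ((Sm mn j + d : ℕ) : ℝ) + _ + _ ≤ ((mn i).1 : ℝ) * (y : ℝ)
      linarith
  · rw [palO_iff k mn hpos] at ho
    obtain ⟨j, hj, rfl⟩ := ho
    rw [palG_corner k hk mn hpos j hj]
    have hS0 : (0:ℝ) ≤ (Sm mn j : ℝ) := Nat.cast_nonneg _
    have hSk : (Sm mn j : ℝ) ≤ (Sm mn k : ℝ) := by exact_mod_cast Sm_mono mn hj
    have hTk : (Tn mn j : ℝ) ≤ (Tn mn k : ℝ) := by exact_mod_cast Tn_mono mn hj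
    refine ⟨by show -ε ≤ (Sm mn j : ℝ) - ε; linarith,
            by show (Sm mn j : ℝ) - ε ≤ (Sm mn k : ℝ); linarith,
            by show (Tn mn j : ℝ) + ε ≤ (Tn mn k : ℝ) + ε; linarith, ?_⟩
    intro i hi
    have hcor := corner_min mn k hpos hsl hi hj
    have hcorr : ((mn i).1 : ℝ) * (Tn mn i : ℝ) - ((mn i).2 : ℝ) * (Sm mn i : ℝ) ≤
        ((mn i).1 : ℝ) * (Tn mn j : ℝ) - ((mn i).2 : ℝ) * (Sm mn j : ℝ) := by
      exact_mod_cast hcor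
    show ((mn i).2 : ℝ) * ((Sm mn j : ℝ) - ε) + _ + _ ≤ ((mn i).1 : ℝ) * ((Tn mn j : ℝ) + ε)
    nlinarith [hcorr]

/-- Integer points of K are in A_C. -/
lemma K_lattice (mn : ℕ → ℕ × ℕ) (k : ℕ) (hk : 0 < k)
    (hpos : ∀ i < k, 0 < (mn i).1 ∧ 0 < (mn i).2)
    (ε : ℝ) (hε : 0 < ε) (hε2 : ε < 1) (a b : ℤ)
    (hK : ((a : ℝ), (b : ℝ)) ∈ palK mn k ε) :
    ((a : ℝ), (b : ℝ)) ∈ palACset ((List.range k).map mn) (Sm mn k) (Tn mn k) ε := by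
  obtain ⟨h1, h2, h3, h4⟩ := hK
  dsimp only at h1 h2 h3 h4
  have ha0 : 0 ≤ a := by
    by_contra hc
    push_neg at hc
    have : ((a:ℤ) : ℝ) ≤ ((-1 : ℤ) : ℝ) := by exact_mod_cast (by omega : a ≤ (-1:ℤ))
    push_cast at this
    linarith
  have ham : a ≤ (Sm mn k : ℤ) := by exact_mod_cast h2
  have hbn : b ≤ (Tn mn k : ℤ) := by
    by_contra hc
    push_neg at hc
    have : ((Tn mn k : ℤ) : ℝ) + 1 ≤ (b : ℝ) := by exact_mod_cast hc
    push_cast at this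
    linarith
  set x : ℕ := a.toNat with hxdef
  have hax : (a : ℝ) = (x : ℝ) := by
    have := Int.toNat_of_nonneg ha0
    exact_mod_cast this.symm
  have hxm : x ≤ Sm mn k := by omega
  obtain ⟨j, hj, d, hd, hxd⟩ := decomp k hk mn x hxm
  have hmj : 0 < (mn j).1 := (hpos j hj).1
  have hc := h4 j hj
  have hεpos : 0 < ε * (((mn j).1 : ℝ) + ((mn j).2 : ℝ)) := by
    have hp1 : (0:ℝ) < ((mn j).1 : ℝ) := by exact_mod_cast hmj
    have hp2 : (0:ℝ) ≤ ((mn j).2 : ℝ) := Nat.cast_nonneg _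
    have : (0:ℝ) < ((mn j).1 : ℝ) + ((mn j).2 : ℝ) := by linarith
    positivity
  have hstrict : ((mn j).2 : ℝ) * (a:ℝ) +
      (((mn j).1 : ℝ) * (Tn mn j : ℝ) - ((mn j).2 : ℝ) * (Sm mn j : ℝ)) < ((mn j).1 : ℝ) * b := by
    linarith
  have hZ : ((mn j).2 : ℤ) * a + (((mn j).1 : ℤ) * (Tn mn j : ℤ) - ((mn j).2 : ℤ) * (Sm mn j : ℤ))
      < ((mn j).1 : ℤ) * b := by exact_mod_cast hstrict
  set q := d * (mn j).2 / (mn j).1 with hq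
  have hql : (mn j).1 * q ≤ d * (mn j).2 := Nat.mul_div_le _ _
  have hqlZ : ((mn j).1 : ℤ) * q ≤ (d : ℤ) * (mn j).2 := by exact_mod_cast hql
  have haxZ : a = (Sm mn j : ℤ) + d := by omega
  -- m_j * b > m_j * (Tn j + q)
  have hmb : ((mn j).1 : ℤ) * ((Tn mn j : ℤ) + q) < ((mn j).1 : ℤ) * b := by
    have : ((mn j).2 : ℤ) * ((Sm mn j : ℤ) + d) +
        (((mn j).1 : ℤ) * (Tn mn j : ℤ) - ((mn j).2 : ℤ) * (Sm mn j : ℤ)) < ((mn j).1 : ℤ) * b := by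
      rw [← haxZ]; exact hZ
    nlinarith [this, hqlZ]
  have hbq : (Tn mn j : ℤ) + q < b := by
    have hmjZ : (0:ℤ) < ((mn j).1 : ℤ) := by exact_mod_cast hmj
    exact lt_of_mul_lt_mul_left hmb (by positivity)
  have hb0 : 0 ≤ b := by
    have : (0:ℤ) ≤ (Tn mn j : ℤ) + q := by positivity
    omega
  set y : ℕ := b.toNat with hydef
  have hby : (b : ℝ) = (y : ℝ) := by
    have := Int.toNat_of_nonneg hb0
    exact_mod_cast this.symm
  have hyn : y ≤ Tn mn k := by omega
  have hgy : palG ((List.range k).map mn) x + 1 ≤ y := by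
    rw [hxd, palG_eval k mn hpos j hj d hd, ← hq]
    omega
  left
  exact ⟨x, y, hxm, hyn, hgy, by rw [hax, hby]⟩
set_option maxHeartbeats 1600000 in
/-- A piecewise almost linear curve `C = [C₁ C₂ ⋯ C_k]`, where the lattice
segment `Cᵢ` has displacement `(mᵢ, nᵢ)`, is `ℤ`-convex (i.e. `A_C` is a `ℤ`-convex set for
all sufficiently small `ε > 0`) if and only if `m₁/n₁ ≥ m₂/n₂ ≥ ⋯ ≥ m_k/n_k`. -/
theorem stmt9 (k : ℕ) (hk : 0 < k) (mn : ℕ → ℕ × ℕ)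
    (hpos : ∀ i < k, 0 < (mn i).1 ∧ 0 < (mn i).2) :
    (∃ ε₀ > (0 : ℝ), ∀ ε ∈ Set.Ioo (0 : ℝ) ε₀,
        ZConvexSet (palACset ((List.range k).map mn)
          (∑ i ∈ Finset.range k, (mn i).1) (∑ i ∈ Finset.range k, (mn i).2) ε))
      ↔ ∀ i : ℕ, i + 1 < k → (mn (i + 1)).1 * (mn i).2 ≤ (mn i).1 * (mn (i + 1)).2 := by
  have hmS : (∑ i ∈ Finset.range k, (mn i).1) = Sm mn k := rfl
  have hnT : (∑ i ∈ Finset.range k, (mn i).2) = Tn mn k := rfl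
  rw [hmS, hnT]
  set L := (List.range k).map mn with hL
  have hD : (0:ℝ) < (Sm mn k : ℝ) + (Tn mn k : ℝ) + 1 := by positivity
  constructor
  · -- ℤ-convexity → slopes decrease
    rintro ⟨ε₀, hε₀, H⟩ i hik
    by_contra hlt
    push_neg at hlt
    -- notation
    have hik' : i < k := by omega
    have hm0 : 0 < (mn i).1 := (hpos i hik').1
    have hn0 : 0 < (mn i).2 := (hpos i hik').2
    have hm1 : 0 < (mn (i+1)).1 := (hpos (i+1) hik).1
    have hn1 : 0 < (mn (i+1)).2 := (hpos (i+1) hik).2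
    set ε : ℝ := min ε₀ (1/((Sm mn k : ℝ) + (Tn mn k : ℝ) + 1)) / 2 with hεdef
    have hεpos : 0 < ε := by
      have : 0 < min ε₀ (1/((Sm mn k : ℝ) + (Tn mn k : ℝ) + 1)) :=
        lt_min hε₀ (by positivity)
      positivity
    have hεlt : ε < ε₀ := by
      have h5 : min ε₀ (1/((Sm mn k : ℝ) + (Tn mn k : ℝ) + 1)) ≤ ε₀ := min_le_left _ _
      linarith
    have hεD : ε * ((Sm mn k : ℝ) + (Tn mn k : ℝ) + 1) ≤ 1 := by
      have h5 : min ε₀ (1/((Sm mn k : ℝ) + (Tn mn k : ℝ) + 1)) ≤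
          1/((Sm mn k : ℝ) + (Tn mn k : ℝ) + 1) := min_le_right _ _
      have h6 : ε ≤ 1/((Sm mn k : ℝ) + (Tn mn k : ℝ) + 1) := by linarith
      calc ε * ((Sm mn k : ℝ) + (Tn mn k : ℝ) + 1)
          ≤ (1/((Sm mn k : ℝ) + (Tn mn k : ℝ) + 1)) * ((Sm mn k : ℝ) + (Tn mn k : ℝ) + 1) :=
            mul_le_mul_of_nonneg_right h6 (le_of_lt hD)
        _ = 1 := by field_simp
    have hST1 : (1:ℝ) ≤ (Sm mn k : ℝ) + (Tn mn k : ℝ) := by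
      have e0 : Sm mn 1 = Sm mn 0 + (mn 0).1 := Sm_succ mn 0
      have e1 : Sm mn 0 = 0 := rfl
      have e2 := Sm_mono mn (show 1 ≤ k by omega)
      have e3 := (hpos 0 hk).1
      have : 1 ≤ Sm mn k + Tn mn k := by omega
      exact_mod_cast this
    have hε1 : ε < 1 := by nlinarith
    have hZC := H ε ⟨hεpos, hεlt⟩
    clear_value ε
    set A := palACset L (Sm mn k) (Tn mn k) ε with hA
    -- cast abbreviations
    have hS2 : (Sm mn (i+1) : ℝ) = (Sm mn i : ℝ) + ((mn i).1 : ℝ) := by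
      rw [Sm_succ]; push_cast; ring
    have hS3 : (Sm mn (i+2) : ℝ) = (Sm mn i : ℝ) + ((mn i).1 : ℝ) + ((mn (i+1)).1 : ℝ) := by
      rw [show i+2 = (i+1)+1 from rfl, Sm_succ, Sm_succ]; push_cast; ring
    have hT2 : (Tn mn (i+1) : ℝ) = (Tn mn i : ℝ) + ((mn i).2 : ℝ) := by
      rw [Tn_succ]; push_cast; ring
    have hT3 : (Tn mn (i+2) : ℝ) = (Tn mn i : ℝ) + ((mn i).2 : ℝ) + ((mn (i+1)).2 : ℝ) := by
      rw [show i+2 = (i+1)+1 from rfl, Tn_succ, Tn_succ]; push_cast; ring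
    -- the three generating points
    set qa : ℝ × ℝ := ((Sm mn i : ℝ) - ε, (Tn mn i : ℝ) + ε) with hqadef
    set qb : ℝ × ℝ := ((Sm mn (i+2) : ℝ) - ε, (Tn mn (i+2) : ℝ) + ε) with hqbdef
    set u : ℝ × ℝ := ((Sm mn (i+1) : ℝ), (Tn mn (i+1) : ℝ) + 1) with hudef
    have hqa : qa ∈ A := by
      right
      refine ⟨Sm mn i, by exact_mod_cast Sm_mono mn (by omega : i ≤ k), ?_, ?_⟩
      · rw [hL, palO_iff k mn hpos]; exact ⟨i, by omega, rfl⟩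
      · rw [hL, palG_corner k hk mn hpos i (by omega)]
    have hqb : qb ∈ A := by
      right
      refine ⟨Sm mn (i+2), by exact_mod_cast Sm_mono mn (by omega : i+2 ≤ k), ?_, ?_⟩
      · rw [hL, palO_iff k mn hpos]; exact ⟨i+2, by omega, rfl⟩
      · rw [hL, palG_corner k hk mn hpos (i+2) (by omega)]
    have hu : u ∈ A := by
      left
      refine ⟨Sm mn (i+1), Tn mn (i+1) + 1,
        by exact_mod_cast Sm_mono mn (by omega : i+1 ≤ k), ?_, ?_, ?_⟩
      · have h8 : Tn mn (i+2) = Tn mn (i+1) + (mn (i+1)).2 := Tn_succ mn (i+1)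
        have h9 := Tn_mono mn (by omega : i+2 ≤ k)
        omega
      · rw [hL, palG_corner k hk mn hpos (i+1) (by omega)]
      · push_cast; rfl
    -- chord point
    set M : ℝ := ((mn i).1 : ℝ) + ((mn (i+1)).1 : ℝ) with hMdef
    have hM : 0 < M := by
      have : (0:ℝ) < ((mn i).1 : ℝ) := by exact_mod_cast hm0
      have : (0:ℝ) < ((mn (i+1)).1 : ℝ) := by exact_mod_cast hm1
      rw [hMdef]; positivity
    set t : ℝ := (((mn i).1 : ℝ) + ε) / M with htdef
    have hm0R : (0:ℝ) < ((mn i).1 : ℝ) := by exact_mod_cast hm0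
    have hm1R : (1:ℝ) ≤ ((mn (i+1)).1 : ℝ) := by exact_mod_cast hm1
    have ht0 : 0 ≤ t := by
      apply div_nonneg _ hM.le
      linarith
    have ht1 : t ≤ 1 := by
      rw [htdef, div_le_one hM]
      rw [hMdef]
      linarith
    set yc : ℝ := (Tn mn i : ℝ) + ε + t * (((mn i).2 : ℝ) + ((mn (i+1)).2 : ℝ)) with hycdef
    have hceq : (1-t) • qa + t • qb = ((Sm mn (i+1) : ℝ), yc) := by
      rw [hqadef, hqbdef, Prod.smul_mk, Prod.smul_mk, Prod.mk_add_mk, Prod.mk.injEq]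
      constructor
      · rw [smul_eq_mul, smul_eq_mul, hS3, hS2, htdef]
        field_simp
        ring
      · rw [smul_eq_mul, smul_eq_mul, hycdef, hT3]
        ring
    have hcmem : ((Sm mn (i+1) : ℝ), yc) ∈ convexHull ℝ A := by
      rw [← hceq]
      exact (convex_convexHull ℝ A) (subset_convexHull ℝ A hqa) (subset_convexHull ℝ A hqb)
        (by linarith) ht0 (by ring)
    -- yc is below the corner
    have hviolR : ((mn i).1 : ℝ) * ((mn (i+1)).2 : ℝ) + 1 ≤ ((mn (i+1)).1 : ℝ) * ((mn i).2 : ℝ) := by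
      have : (mn i).1 * (mn (i+1)).2 + 1 ≤ (mn (i+1)).1 * (mn i).2 := hlt
      exact_mod_cast this
    have hεb : ε * (M + ((mn i).2 : ℝ) + ((mn (i+1)).2 : ℝ)) ≤ 1 := by
      have ha1 : Sm mn i + (mn i).1 + (mn (i+1)).1 ≤ Sm mn k := by
        have e1 := Sm_succ mn i
        have e2 : Sm mn (i+2) = Sm mn (i+1) + (mn (i+1)).1 := Sm_succ mn (i+1)
        have e3 := Sm_mono mn (by omega : i+2 ≤ k)
        omega
      have hb1 : (mn i).2 + (mn (i+1)).2 ≤ Tn mn k := by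
        have e1 := Tn_succ mn i
        have e2 : Tn mn (i+2) = Tn mn (i+1) + (mn (i+1)).2 := Tn_succ mn (i+1)
        have e3 := Tn_mono mn (by omega : i+2 ≤ k)
        omega
      have ha1R : ((mn i).1 : ℝ) + ((mn (i+1)).1 : ℝ) ≤ (Sm mn k : ℝ) := by
        have : (mn i).1 + (mn (i+1)).1 ≤ Sm mn k := by omega
        exact_mod_cast this
      have hb1R : ((mn i).2 : ℝ) + ((mn (i+1)).2 : ℝ) ≤ (Tn mn k : ℝ) := by
        exact_mod_cast hb1
      have : M + ((mn i).2 : ℝ) + ((mn (i+1)).2 : ℝ) ≤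
          (Sm mn k : ℝ) + (Tn mn k : ℝ) + 1 := by
        rw [hMdef]; linarith
      have h9 := mul_le_mul_of_nonneg_left this hεpos.le
      linarith
    have hstep : (((mn i).1 : ℝ) + ε) * (((mn i).2 : ℝ) + ((mn (i+1)).2 : ℝ)) ≤
        (((mn i).2 : ℝ) - ε) * M := by
      rw [hMdef]
      rw [hMdef] at hεb
      linarith [hviolR]
    have htb : t * (((mn i).2 : ℝ) + ((mn (i+1)).2 : ℝ)) ≤ ((mn i).2 : ℝ) - ε := by
      rw [htdef, div_mul_eq_mul_div, div_le_iff₀ hM]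
      exact hstep
    have hyc : yc ≤ (Tn mn (i+1) : ℝ) := by
      rw [hycdef, hT2]
      linarith
    -- P is in the hull
    set DD : ℝ := (Tn mn (i+1) : ℝ) + 1 - yc with hDDdef
    have hDD : 1 ≤ DD := by rw [hDDdef]; linarith
    set μ : ℝ := 1 / DD with hμdef
    have hμ0 : 0 < μ := by rw [hμdef]; positivity
    have hμ1 : μ ≤ 1 := by
      rw [hμdef]
      rw [div_le_one (by linarith)]
      linarith
    have hPeq : μ • ((Sm mn (i+1) : ℝ), yc) + (1-μ) • u = ((Sm mn (i+1) : ℝ), (Tn mn (i+1) : ℝ)) := by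
      rw [hudef, Prod.smul_mk, Prod.smul_mk, Prod.mk_add_mk, Prod.mk.injEq]
      constructor
      · rw [smul_eq_mul, smul_eq_mul]; ring
      · rw [smul_eq_mul, smul_eq_mul, hμdef]
        have hDD0 : DD ≠ 0 := by linarith
        field_simp
        rw [hDDdef]
        ring
    have hPmem : ((Sm mn (i+1) : ℝ), (Tn mn (i+1) : ℝ)) ∈ convexHull ℝ A := by
      rw [← hPeq]
      exact (convex_convexHull ℝ A) hcmem (subset_convexHull ℝ A hu) hμ0.le (by linarith) (by ring)
    have hPlat : ((Sm mn (i+1) : ℝ), (Tn mn (i+1) : ℝ)) ∈ latticePts := by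
      exact ⟨(Sm mn (i+1) : ℤ), (Tn mn (i+1) : ℤ), by push_cast; rfl⟩
    have hPA : ((Sm mn (i+1) : ℝ), (Tn mn (i+1) : ℝ)) ∈ A := by
      have hZC' : convexHull ℝ A ∩ latticePts = A ∩ latticePts := hZC
      have h10 : ((Sm mn (i+1) : ℝ), (Tn mn (i+1) : ℝ)) ∈ convexHull ℝ A ∩ latticePts :=
        ⟨hPmem, hPlat⟩
      rw [hZC'] at h10
      exact h10.1
    rcases hPA with ⟨x, y, hx, hy, hgy, heq⟩ | ⟨x, hx, ho, heq⟩
    · rw [Prod.mk.injEq] at heq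
      have hxe : Sm mn (i+1) = x := by exact_mod_cast heq.1
      have hye : Tn mn (i+1) = y := by exact_mod_cast heq.2
      rw [hL, ← hxe, palG_corner k hk mn hpos (i+1) (by omega)] at hgy
      omega
    · rw [Prod.mk.injEq] at heq
      have hxe : (Sm mn (i+1) : ℝ) = (x : ℝ) - ε := heq.1
      rcases le_or_gt x (Sm mn (i+1)) with h | h
      · have : (x : ℝ) ≤ (Sm mn (i+1) : ℝ) := by exact_mod_cast h
        linarith
      · have : (Sm mn (i+1) : ℝ) + 1 ≤ (x : ℝ) := by exact_mod_cast h
        linarith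
  · -- slopes decrease → ℤ-convexity
    intro hsl
    refine ⟨1/((Sm mn k : ℝ) + (Tn mn k : ℝ) + 1), by positivity, ?_⟩
    rintro ε ⟨hε0, hεlt⟩
    have hεD : ε * ((Sm mn k : ℝ) + (Tn mn k : ℝ)) ≤ 1 := by
      have h5 : ε * ((Sm mn k : ℝ) + (Tn mn k : ℝ) + 1) <
          (1/((Sm mn k : ℝ) + (Tn mn k : ℝ) + 1)) * ((Sm mn k : ℝ) + (Tn mn k : ℝ) + 1) :=
        mul_lt_mul_of_pos_right hεlt hD
      rw [one_div_mul_cancel (by linarith)] at h5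
      nlinarith
    have hε1 : ε < 1 := by
      have h7 : (0:ℝ) ≤ (Sm mn k : ℝ) + (Tn mn k : ℝ) := by positivity
      have h8 : 1/((Sm mn k : ℝ) + (Tn mn k : ℝ) + 1) ≤ 1 := by
        rw [div_le_one hD]; linarith
      linarith
    unfold ZConvexSet
    apply Set.Subset.antisymm
    · rintro p ⟨hhull, hlat⟩
      obtain ⟨a, b, rfl⟩ := hlat
      have hK := convexHull_min (palA_sub_K mn k hk hpos hsl ε hε0 hεD) (palK_convex mn k ε) hhull
      exact ⟨K_lattice mn k hk hpos ε hε0 hε1 a b hK, ⟨a, b, rfl⟩⟩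
    · rintro p ⟨hA', hlat⟩
      exact ⟨subset_convexHull ℝ _ hA', hlat⟩
end

section
/- Let C_+, C_-, C_0 be monotone curves that pass above, below, and through a fixed lattice point p respectively, and agree outside a small neighborhood of p. Then the associated rational functions η'_{b,ε} := (x_1^{b_1}···x_m^{b_m}) / Π_{i=2}^{m} (1 - qt·x_{i-1}/x_i)^{ε_{i-1}} satisfy the skein relation η'_{b_{C_+}, ε_{C_+}} = qt·η'_{b_{C_-}, ε_{C_-}} + η'_{b_{C_0}, ε_{C_0}}. -/
/-- A monotone curve from `(0,0)` to `(m,n)`. -/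
structure MonoCurve (m n : ℕ) where
  f : ℝ → ℝ
  contOn : ContinuousOn f (Set.Icc (0 : ℝ) (m : ℝ))
  strictMonoOn : StrictMonoOn f (Set.Icc (0 : ℝ) (m : ℝ))
  f0 : f 0 = 0
  fm : f (m : ℝ) = (n : ℝ)

/-- A skein triple at an interior lattice point `p` (the curves pass above, below, through `p`,
agree outside a neighborhood of `p`, and the status of every other lattice point is unchanged). -/
def SkeinTriple {m n : ℕ} (Cp Cm C0 : MonoCurve m n) (p : ℤ × ℤ) : Prop :=
  0 < p.1 ∧ p.1 < (m : ℤ) ∧ 0 < p.2 ∧ p.2 < (n : ℤ) ∧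
  C0.f (p.1 : ℝ) = (p.2 : ℝ) ∧ Cm.f (p.1 : ℝ) < (p.2 : ℝ) ∧ (p.2 : ℝ) < Cp.f (p.1 : ℝ) ∧
  (∀ x ∈ Set.Icc (0 : ℝ) (m : ℝ), Cm.f x ≤ C0.f x ∧ C0.f x ≤ Cp.f x) ∧
  (∃ δ > (0 : ℝ), ∀ x : ℝ, δ ≤ |x - (p.1 : ℝ)| → Cp.f x = Cm.f x ∧ C0.f x = Cm.f x) ∧
  (∀ q : ℤ × ℤ, q ≠ p → 0 ≤ q.1 → q.1 ≤ (m : ℤ) →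
    (((q.2 : ℝ) < Cm.f (q.1 : ℝ)) ↔ ((q.2 : ℝ) < Cp.f (q.1 : ℝ))) ∧
    ((Cm.f (q.1 : ℝ) = (q.2 : ℝ)) ↔ (Cp.f (q.1 : ℝ) = (q.2 : ℝ))) ∧
    ((C0.f (q.1 : ℝ) = (q.2 : ℝ)) ↔ (Cp.f (q.1 : ℝ) = (q.2 : ℝ))))

/-- `λ_i`: the maximal integer `j` such that `(m-i, j)` lies weakly below `C`. -/
noncomputable def lamC {m n : ℕ} (C : MonoCurve m n) (i : ℕ) : ℤ :=
  ⌊C.f ((m : ℝ) - (i : ℝ))⌋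

open Classical in
/-- `ε_i`: equals `0` if `C` passes through a lattice point with first coordinate `m - i`,
and `1` otherwise. -/
noncomputable def epsC {m n : ℕ} (C : MonoCurve m n) (i : ℕ) : ℕ :=
  if ∃ y : ℤ, C.f ((m : ℝ) - (i : ℝ)) = (y : ℝ) then 0 else 1

/-- The rational function `η'_{b_C, ε_C} = (x₁^{b₁}⋯x_m^{b_m}) / ∏_{i=2}^m
(1 - qt·x_{i-1}/x_i)^{ε_{i-1}}`, where `b_i = λ_{i-1} - λ_i`. -/
noncomputable def etaC {m n : ℕ} {K : Type*} [Field K] (q t : K) (x : ℕ → K)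
    (C : MonoCurve m n) : K :=
  (∏ i ∈ Finset.Icc 1 m, x i ^ (lamC C (i - 1) - lamC C i)) /
    (∏ i ∈ Finset.Icc 2 m, (1 - q * t * x (i - 1) / x i) ^ (epsC C (i - 1)))

lemma floor_transfer (f g : ℝ)
    (h : ∀ y : ℤ, (((y:ℝ) < f) ↔ ((y:ℝ) < g)) ∧ ((f = (y:ℝ)) ↔ (g = (y:ℝ)))) :
    ⌊f⌋ = ⌊g⌋ := by
  have hle : ∀ y : ℤ, ((y:ℝ) ≤ f) ↔ ((y:ℝ) ≤ g) := by
    intro y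
    obtain ⟨h1, h2⟩ := h y
    constructor
    · intro hy
      rcases eq_or_lt_of_le hy with h' | h'
      · exact le_of_eq (h2.mp h'.symm).symm
      · exact (h1.mp h').le
    · intro hy
      rcases eq_or_lt_of_le hy with h' | h'
      · exact le_of_eq (h2.mpr h'.symm).symm
      · exact (h1.mpr h').le
  exact le_antisymm (Int.le_floor.mpr ((hle ⌊f⌋).mp (Int.floor_le f)))
    (Int.le_floor.mpr ((hle ⌊g⌋).mpr (Int.floor_le g)))

/-- For a skein triple `C₊, C₋, C₀` of monotone curves at a lattice point `p`,
the rational functions `η'` satisfy the skein relation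
`η'_{b_{C₊}, ε_{C₊}} = qt·η'_{b_{C₋}, ε_{C₋}} + η'_{b_{C₀}, ε_{C₀}}`
(as an identity of rational functions, i.e. wherever the denominators are nonzero). -/
theorem stmt10 {K : Type*} [Field K] (q t : K) (m n : ℕ) (hm : 0 < m) (hn : 0 < n)
    (x : ℕ → K) (hx : ∀ i, x i ≠ 0)
    (hden : ∀ i ∈ Finset.Icc 2 m, (1 : K) - q * t * x (i - 1) / x i ≠ 0)
    (Cp Cm C0 : MonoCurve m n) (p : ℤ × ℤ) (h : SkeinTriple Cp Cm C0 p) :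
    etaC q t x Cp = q * t * etaC q t x Cm + etaC q t x C0 := by
  classical
  obtain ⟨ha0, ham, hc0, hcn, h0a, hma, hpa, hle, -, hlat⟩ := h
  set a : ℤ := p.1 with ha
  set c : ℤ := p.2 with hc
  set i₀ : ℕ := ((m:ℤ) - a).toNat with hi₀def
  have hi₀ : (i₀ : ℤ) = (m:ℤ) - a := Int.toNat_of_nonneg (by omega)
  have hi₀1 : 1 ≤ i₀ := by omega
  have hi₀m : i₀ < m := by omega
  have hreal : (m:ℝ) - (i₀:ℝ) = (a:ℝ) := by
    have h1 : ((i₀:ℤ) : ℝ) = (((m:ℤ) - a : ℤ) : ℝ) := by rw [hi₀]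
    push_cast at h1
    linarith
  -- transfer of lattice-point data at non-special columns
  have key : ∀ i : ℕ, i ≤ m → i ≠ i₀ → ∀ y : ℤ,
      (((y:ℝ) < Cm.f ((m:ℝ)-(i:ℝ))) ↔ ((y:ℝ) < Cp.f ((m:ℝ)-(i:ℝ)))) ∧
      ((Cm.f ((m:ℝ)-(i:ℝ)) = (y:ℝ)) ↔ (Cp.f ((m:ℝ)-(i:ℝ)) = (y:ℝ))) ∧
      ((C0.f ((m:ℝ)-(i:ℝ)) = (y:ℝ)) ↔ (Cp.f ((m:ℝ)-(i:ℝ)) = (y:ℝ))) := by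
    intro i him hine y
    have hj : (((m:ℤ) - (i:ℤ) : ℤ) : ℝ) = (m:ℝ) - (i:ℝ) := by push_cast; ring
    have hne : (((m:ℤ) - (i:ℤ), y) : ℤ × ℤ) ≠ p := by
      intro hq
      have h1 : (m:ℤ) - (i:ℤ) = a := congrArg Prod.fst hq
      omega
    have := hlat ((m:ℤ) - (i:ℤ), y) hne (by show (0:ℤ) ≤ (m:ℤ) - (i:ℤ); omega)
      (by show (m:ℤ) - (i:ℤ) ≤ (m:ℤ); omega)
    simpa [hj] using this
  -- lambda relations away from i₀
  have hlam : ∀ i : ℕ, i ≤ m → i ≠ i₀ → lamC Cm i = lamC Cp i ∧ lamC C0 i = lamC Cp i := by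
    intro i him hine
    have hmp : lamC Cm i = lamC Cp i := by
      apply floor_transfer
      intro y
      exact ⟨(key i him hine y).1, (key i him hine y).2.1⟩
    refine ⟨hmp, ?_⟩
    have hmem : (m:ℝ) - (i:ℝ) ∈ Set.Icc (0:ℝ) (m:ℝ) := by
      constructor
      · have h1 : (i:ℝ) ≤ (m:ℝ) := by exact_mod_cast him
        linarith
      · have h2 : (0:ℝ) ≤ (i:ℝ) := Nat.cast_nonneg i
        linarith
    have f1 : lamC Cm i ≤ lamC C0 i := Int.floor_mono (hle _ hmem).1
    have f2 : lamC C0 i ≤ lamC Cp i := Int.floor_mono (hle _ hmem).2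
    simp only [lamC] at hmp f1 f2 ⊢
    omega
  -- lambda values at i₀
  have hCp0 : lamC Cp i₀ = c := by
    simp only [lamC, hreal]
    rw [Int.floor_eq_iff]
    refine ⟨hpa.le, ?_⟩
    by_contra hcon
    push_neg at hcon
    have hne : ((a, c+1) : ℤ × ℤ) ≠ p := by
      intro hq
      have : c + 1 = c := congrArg Prod.snd hq
      omega
    obtain ⟨k1, k2, -⟩ := hlat (a, c+1) hne (by omega) (by omega)
    have hcast : (((c+1 : ℤ)) : ℝ) = (c:ℝ) + 1 := by push_cast; ring
    rw [hcast] at k1 k2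
    rcases eq_or_lt_of_le hcon with h' | h'
    · have := k2.mpr h'.symm
      linarith
    · have := k1.mpr h'
      linarith
  have hCm0 : lamC Cm i₀ = c - 1 := by
    simp only [lamC, hreal]
    rw [Int.floor_eq_iff]
    constructor
    · have hne : ((a, c-1) : ℤ × ℤ) ≠ p := by
        intro hq
        have : c - 1 = c := congrArg Prod.snd hq
        omega
      obtain ⟨k1, -, -⟩ := hlat (a, c-1) hne (by omega) (by omega)
      have hcast : (((c-1 : ℤ)) : ℝ) = (c:ℝ) - 1 := by push_cast; ring
      rw [hcast] at k1
      have : (c:ℝ) - 1 < Cm.f (a:ℝ) := k1.mpr (by linarith)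
      push_cast
      linarith
    · push_cast
      linarith
  have hC00 : lamC C0 i₀ = c := by
    simp only [lamC, hreal, h0a, Int.floor_intCast]
  -- epsilon relations
  have heps : ∀ i : ℕ, i ≤ m → i ≠ i₀ → epsC Cm i = epsC Cp i ∧ epsC C0 i = epsC Cp i := by
    intro i him hine
    constructor <;> simp only [epsC] <;>
      exact if_congr (exists_congr fun y => by
        first
        | exact (key i him hine y).2.1
        | exact (key i him hine y).2.2) rfl rfl
  have hepsP : epsC Cp i₀ = 1 := by
    simp only [epsC, hreal]
    rw [if_neg]
    rintro ⟨y, hy⟩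
    have hyc : y ≠ c := by
      intro h'
      subst h'
      exact ne_of_gt hpa hy
    have hne : ((a, y) : ℤ × ℤ) ≠ p := by
      intro hq
      exact hyc (congrArg Prod.snd hq)
    obtain ⟨-, k2, -⟩ := hlat (a, y) hne (by omega) (by omega)
    have := k2.mpr hy
    rw [this] at hma
    rw [hy] at hpa
    linarith
  have hepsM : epsC Cm i₀ = 1 := by
    simp only [epsC, hreal]
    rw [if_neg]
    rintro ⟨y, hy⟩
    have hyc : y ≠ c := by
      intro h'
      subst h'
      exact ne_of_lt hma hy
    have hne : ((a, y) : ℤ × ℤ) ≠ p := by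
      intro hq
      exact hyc (congrArg Prod.snd hq)
    obtain ⟨-, k2, -⟩ := hlat (a, y) hne (by omega) (by omega)
    have := k2.mp hy
    rw [hy] at hma
    rw [this] at hpa
    linarith
  have hepsO : epsC C0 i₀ = 0 := by
    simp only [epsC, hreal]
    exact if_pos ⟨c, h0a⟩
  -- global lambda descriptions
  have hlamO : ∀ j : ℕ, j ≤ m → lamC C0 j = lamC Cp j := by
    intro j hj
    by_cases hji : j = i₀
    · subst hji; rw [hC00, hCp0]
    · exact (hlam j hj hji).2
  have hlamM : ∀ j : ℕ, j ≤ m → lamC Cm j = lamC Cp j - (if j = i₀ then 1 else 0) := by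
    intro j hj
    by_cases hji : j = i₀
    · subst hji; rw [hCm0, hCp0, if_pos rfl]
    · rw [(hlam j hj hji).1, if_neg hji]; ring
  have hepsMall : ∀ j : ℕ, j ≤ m → epsC Cm j = epsC Cp j := by
    intro j hj
    by_cases hji : j = i₀
    · subst hji; rw [hepsM, hepsP]
    · exact (heps j hj hji).1
  -- numerator identities
  have hN0 : (∏ i ∈ Finset.Icc 1 m, x i ^ (lamC C0 (i - 1) - lamC C0 i)) =
      (∏ i ∈ Finset.Icc 1 m, x i ^ (lamC Cp (i - 1) - lamC Cp i)) := by
    refine Finset.prod_congr rfl fun i hi => ?_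
    obtain ⟨h1, h2⟩ := Finset.mem_Icc.mp hi
    rw [hlamO (i-1) (by omega), hlamO i h2]
  have hNm : (∏ i ∈ Finset.Icc 1 m, x i ^ (lamC Cm (i - 1) - lamC Cm i)) =
      (∏ i ∈ Finset.Icc 1 m, x i ^ (lamC Cp (i - 1) - lamC Cp i)) *
        (x i₀ * (x (i₀+1))⁻¹) := by
    have step : ∀ i ∈ Finset.Icc 1 m, x i ^ (lamC Cm (i - 1) - lamC Cm i) =
        (x i ^ (lamC Cp (i - 1) - lamC Cp i) * (if i = i₀ then x i else 1)) *
          (if i = i₀+1 then (x i)⁻¹ else 1) := by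
      intro i hi
      obtain ⟨h1, h2⟩ := Finset.mem_Icc.mp hi
      rw [hlamM (i-1) (by omega), hlamM i h2]
      have hiff : (i - 1 = i₀) ↔ (i = i₀ + 1) := by omega
      by_cases hA : i = i₀
      · have hB : ¬ (i = i₀ + 1) := by omega
        rw [if_pos hA, if_neg hB, if_neg (hiff.not.mpr hB), if_pos hA]
        rw [mul_one]
        have : lamC Cp (i-1) - 0 - (lamC Cp i - 1) = (lamC Cp (i-1) - lamC Cp i) + 1 := by ring
        rw [this, zpow_add_one₀ (hx i)]
      · by_cases hB : i = i₀ + 1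
        · rw [if_neg hA, if_pos hB, if_pos (hiff.mpr hB), if_neg hA]
          rw [mul_one]
          have : lamC Cp (i-1) - 1 - (lamC Cp i - 0) = (lamC Cp (i-1) - lamC Cp i) - 1 := by ring
          rw [this, zpow_sub_one₀ (hx i)]
        · rw [if_neg hA, if_neg hB, if_neg (hiff.not.mpr hB), if_neg hA]
          simp
    rw [Finset.prod_congr rfl step, Finset.prod_mul_distrib, Finset.prod_mul_distrib,
      Finset.prod_ite_eq' (Finset.Icc 1 m) i₀ x,
      Finset.prod_ite_eq' (Finset.Icc 1 m) (i₀+1) (fun i => (x i)⁻¹),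
      if_pos (Finset.mem_Icc.mpr ⟨hi₀1, hi₀m.le⟩),
      if_pos (Finset.mem_Icc.mpr ⟨by omega, by omega⟩), mul_assoc]
  -- denominator identities
  have hDm : (∏ i ∈ Finset.Icc 2 m, (1 - q * t * x (i - 1) / x i) ^ (epsC Cm (i - 1))) =
      (∏ i ∈ Finset.Icc 2 m, (1 - q * t * x (i - 1) / x i) ^ (epsC Cp (i - 1))) := by
    refine Finset.prod_congr rfl fun i hi => ?_
    obtain ⟨h1, h2⟩ := Finset.mem_Icc.mp hi
    rw [hepsMall (i-1) (by omega)]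
  have hD0 : (∏ i ∈ Finset.Icc 2 m, (1 - q * t * x (i - 1) / x i) ^ (epsC C0 (i - 1))) =
      (∏ i ∈ Finset.Icc 2 m, (1 - q * t * x (i - 1) / x i) ^ (epsC Cp (i - 1))) *
        (1 - q * t * x i₀ / x (i₀+1))⁻¹ := by
    have step : ∀ i ∈ Finset.Icc 2 m, (1 - q * t * x (i - 1) / x i) ^ (epsC C0 (i - 1)) =
        (1 - q * t * x (i - 1) / x i) ^ (epsC Cp (i - 1)) *
          (if i = i₀+1 then (1 - q * t * x (i - 1) / x i)⁻¹ else 1) := by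
      intro i hi
      obtain ⟨h1, h2⟩ := Finset.mem_Icc.mp hi
      by_cases hB : i = i₀ + 1
      · have hj : i - 1 = i₀ := by omega
        rw [hj, hepsO, hepsP, if_pos hB, pow_zero, pow_one,
          mul_inv_cancel₀ (by have := hden i hi; rwa [hj] at this)]
      · have hj : i - 1 ≠ i₀ := by omega
        rw [(heps (i-1) (by omega) hj).2, if_neg hB, mul_one]
    rw [Finset.prod_congr rfl step, Finset.prod_mul_distrib,
      Finset.prod_ite_eq' (Finset.Icc 2 m) (i₀+1)
        (fun i => (1 - q * t * x (i - 1) / x i)⁻¹),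
      if_pos (Finset.mem_Icc.mpr ⟨by omega, by omega⟩)]
    simp
  -- final algebra
  simp only [etaC]
  rw [hN0, hNm, hDm, hD0]
  set N := ∏ i ∈ Finset.Icc 1 m, x i ^ (lamC Cp (i - 1) - lamC Cp i) with hN
  set D := ∏ i ∈ Finset.Icc 2 m, (1 - q * t * x (i - 1) / x i) ^ (epsC Cp (i - 1)) with hD
  have hDne : D ≠ 0 := by
    rw [hD]
    exact Finset.prod_ne_zero_iff.mpr fun i hi => pow_ne_zero _ (hden i hi)
  have hgne : (1 - q * t * x i₀ / x (i₀+1)) ≠ 0 := by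
    have := hden (i₀+1) (Finset.mem_Icc.mpr ⟨by omega, by omega⟩)
    simpa using this
  have hx1 : x (i₀+1) ≠ 0 := hx _
  field_simp
  ring
end

section
/- Suppose F: MonotoneCurves → R (R a ℚ(q)-algebra of symmetric functions) satisfies F_{C_+} = qt·F_{C_-} + F_{C_0} for every skein triple, and for primitive curves the t=1 specialization formula F_C|_{t=1} = Σ_P q^{area(P_C) - area(P)} h_P holds, where the sum is over lattice paths P weakly below C. Then for any monotone curve C, F_C|_{t=1} = Σ_P q^{area(P_C)-area(P)} h_P, summed over lattice paths P weakly below C passing through all lattice points of C. -/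
/-- The lattice data of a monotone curve from `(0,0)` to `(m,n)`: `g x` is the largest
integer weakly below the curve at horizontal coordinate `x`, and `o x = true` iff `(x, g x)`
is a lattice point lying on the curve. -/
structure LCurve (m n : ℕ) where
  g : ℕ → ℕ
  o : ℕ → Bool
  mono : ∀ x, x < m → g x ≤ g (x + 1)
  strict : ∀ x, x + 1 ≤ m → o (x + 1) = true → g x < g (x + 1)
  g0 : g 0 = 0
  gm : g m = n
  o0 : o 0 = true
  om : o m = true

/-- A skein triple at the interior lattice point `(a,b)`: `C₊, C₋, C₀` pass just above,
just below, and through `(a,b)`, and agree elsewhere. -/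
def LSkein {m n : ℕ} (Cp Cm C0 : LCurve m n) (a b : ℕ) : Prop :=
  0 < a ∧ a < m ∧ 0 < b ∧ b < n ∧
  Cp.g a = b ∧ Cp.o a = false ∧ Cm.g a = b - 1 ∧ Cm.o a = false ∧
  C0.g a = b ∧ C0.o a = true ∧
  ∀ x, x ≠ a → Cp.g x = Cm.g x ∧ C0.g x = Cm.g x ∧ Cp.o x = Cm.o x ∧ C0.o x = Cm.o x

/-- Up-right lattice paths from `(0,0)` to `(m,n)` weakly below `C`, encoded by the heights
`h x` of their right-steps across the column `[x, x+1]` (extended by `n` beyond `m`). -/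
def PathsBelow {m n : ℕ} (C : LCurve m n) : Set (ℕ → ℕ) :=
  {h | Monotone h ∧ (∀ x, x < m → h x ≤ C.g x) ∧ ∀ x, m ≤ x → h x = n}

/-- Lattice paths weakly below `C` passing through all the lattice points that `C` passes
through. -/
def PathsBelowThrough {m n : ℕ} (C : LCurve m n) : Set (ℕ → ℕ) :=
  {h | h ∈ PathsBelow C ∧ ∀ x, 0 < x → x < m → C.o x = true → h x = C.g x}

/-- The summand `q^{area(P_C) - area(P)} h_P`: the highest path `P_C` below `C` has
right-step heights `C.g`, so the area difference is `∑_x (C.g x - h x)`; and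
`h_P = h_{a_0} ⋯ h_{a_n}` where `a_j` is the length of the (possibly empty) maximal
horizontal run of `P` at height `j`, i.e. the number of right-steps at height `j`
(`H : ℕ → S` denotes the complete homogeneous symmetric functions, with `H 0 = 1`). -/
def pathTerm {m n : ℕ} {S : Type*} [CommRing S] (qS : S) (H : ℕ → S)
    (C : LCurve m n) (h : ℕ → ℕ) : S :=
  qS ^ (∑ x ∈ Finset.range m, (C.g x - h x)) *
    ∏ j ∈ Finset.range (n + 1), H (((Finset.range m).filter fun x => h x = j).card)

lemma lc_gle {m n : ℕ} (C : LCurve m n) {x y : ℕ} (hxy : x ≤ y) (hym : y ≤ m) :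
    C.g x ≤ C.g y := by
  induction y with
  | zero => exact Nat.le_zero.mp hxy ▸ le_rfl
  | succ y ih =>
    rcases Nat.eq_or_lt_of_le hxy with h | h
    · exact h ▸ le_rfl
    · exact le_trans (ih (Nat.lt_succ_iff.mp h) (by omega)) (C.mono y (by omega))

lemma pathsBelow_finite {m n : ℕ} (C : LCurve m n) : (PathsBelow C).Finite := by
  have key : ∀ h ∈ PathsBelow C, ∀ i : Fin m, h i.1 < n + 1 := by
    intro h hh i
    have h1 := hh.2.1 i.1 i.2
    have h2 : C.g i.1 ≤ C.g m := lc_gle C (Nat.le_of_lt i.2) le_rfl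
    rw [C.gm] at h2
    omega
  rw [← Set.finite_coe_iff]
  refine Finite.of_injective
    (fun h : PathsBelow C => fun i : Fin m => (⟨h.1 i.1, key h.1 h.2 i⟩ : Fin (n + 1))) ?_
  intro h1 h2 he
  apply Subtype.ext; funext x
  by_cases hx : x < m
  · exact congrArg Fin.val (congrFun he ⟨x, hx⟩)
  · rw [h1.2.2.2 x (le_of_not_gt hx), h2.2.2.2 x (le_of_not_gt hx)]

lemma pathsBelowThrough_finite {m n : ℕ} (C : LCurve m n) :
    (PathsBelowThrough C).Finite :=
  (pathsBelow_finite C).subset fun _ hh => hh.1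

lemma split_sum {m n : ℕ} {S : Type*} [CommRing S] (qS : S) (H : ℕ → S)
    (Cp Cm C0 : LCurve m n) (a b : ℕ) (hsk : LSkein Cp Cm C0 a b) :
    ∑ᶠ h ∈ PathsBelowThrough Cp, pathTerm qS H Cp h =
      qS * (∑ᶠ h ∈ PathsBelowThrough Cm, pathTerm qS H Cm h) +
      ∑ᶠ h ∈ PathsBelowThrough C0, pathTerm qS H C0 h := by
  classical
  obtain ⟨ha0, ham, hb0, hbn, hpg, hpo, hmg, hmo, h0g, h0o, hrest⟩ := hsk
  -- g of Cp and C0 agree everywhere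
  have hgp : ∀ x, Cp.g x = C0.g x := by
    intro x
    by_cases hx : x = a
    · rw [hx, hpg, h0g]
    · rw [(hrest x hx).1, (hrest x hx).2.1]
  have hgm : ∀ x, x ≠ a → Cm.g x = C0.g x := fun x hx => ((hrest x hx).2.1).symm
  have hop : ∀ x, x ≠ a → Cp.o x = C0.o x := by
    intro x hx; rw [(hrest x hx).2.2.1, (hrest x hx).2.2.2]
  have hom : ∀ x, Cm.o x = Cp.o x := by
    intro x
    by_cases hx : x = a
    · rw [hx, hpo, hmo]
    · rw [(hrest x hx).2.2.1]
  -- set decomposition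
  have hset0 : PathsBelowThrough C0 = {h ∈ PathsBelowThrough Cp | h a = b} := by
    ext h
    simp only [PathsBelowThrough, PathsBelow, Set.mem_setOf_eq, Set.mem_sep_iff]
    constructor
    · rintro ⟨⟨hm, hbel, htail⟩, hthru⟩
      refine ⟨⟨⟨hm, fun x hx => (hgp x) ▸ hbel x hx, htail⟩, ?_⟩, hthru a ha0 ham h0o ▸ h0g⟩
      intro x hx0 hxm hox
      have hxa : x ≠ a := fun hh => by rw [hh, hpo] at hox; exact Bool.false_ne_true hox
      rw [hgp x]
      exact hthru x hx0 hxm ((hop x hxa) ▸ hox)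
    · rintro ⟨⟨⟨hm, hbel, htail⟩, hthru⟩, hab⟩
      refine ⟨⟨hm, fun x hx => (hgp x) ▸ hbel x hx, htail⟩, ?_⟩
      intro x hx0 hxm hox
      by_cases hxa : x = a
      · rw [hxa, h0g]; exact hxa ▸ hab
      · rw [← hgp x]
        exact hthru x hx0 hxm ((hop x hxa).symm ▸ hox)
  have hsetm : PathsBelowThrough Cm = {h ∈ PathsBelowThrough Cp | h a ≤ b - 1} := by
    ext h
    simp only [PathsBelowThrough, PathsBelow, Set.mem_setOf_eq, Set.mem_sep_iff]
    constructor
    · rintro ⟨⟨hm, hbel, htail⟩, hthru⟩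
      have haa : h a ≤ b - 1 := hmg ▸ hbel a ham
      refine ⟨⟨⟨hm, ?_, htail⟩, ?_⟩, haa⟩
      · intro x hx
        by_cases hxa : x = a
        · rw [hxa, hpg]; omega
        · rw [(hrest x hxa).1]; exact hbel x hx
      · intro x hx0 hxm hox
        have hxa : x ≠ a := fun hh => by rw [hh, hpo] at hox; exact Bool.false_ne_true hox
        rw [(hrest x hxa).1]
        exact hthru x hx0 hxm ((hom x) ▸ hox)
    · rintro ⟨⟨⟨hm, hbel, htail⟩, hthru⟩, hab⟩
      refine ⟨⟨hm, ?_, htail⟩, ?_⟩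
      · intro x hx
        by_cases hxa : x = a
        · rw [hxa, hmg]; exact hxa ▸ hab
        · rw [← (hrest x hxa).1]; exact hbel x hx
      · intro x hx0 hxm hox
        have hxa : x ≠ a := fun hh => by rw [hh, hmo] at hox; exact Bool.false_ne_true hox
        rw [← (hrest x hxa).1]
        exact hthru x hx0 hxm ((hom x).symm ▸ hox)
  -- finiteness and Finset versions
  have hfp := pathsBelowThrough_finite Cp
  have hfm := pathsBelowThrough_finite Cm
  have hf0 := pathsBelowThrough_finite C0
  rw [finsum_mem_eq_finite_toFinset_sum _ hfp, finsum_mem_eq_finite_toFinset_sum _ hfm,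
    finsum_mem_eq_finite_toFinset_sum _ hf0]
  have hcover : hfp.toFinset = hf0.toFinset ∪ hfm.toFinset := by
    ext h
    simp only [Finset.mem_union, Set.Finite.mem_toFinset]
    constructor
    · intro hh
      have hha : h a ≤ b := hpg ▸ hh.1.2.1 a ham
      by_cases hcase : h a = b
      · left; rw [hset0]; exact ⟨hh, hcase⟩
      · right; rw [hsetm]; exact ⟨hh, by omega⟩
    · rintro (hh | hh)
      · rw [hset0] at hh; exact hh.1
      · rw [hsetm] at hh; exact hh.1
  have hdisj : Disjoint hf0.toFinset hfm.toFinset := by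
    rw [Finset.disjoint_left]
    intro h h0 hm'
    rw [Set.Finite.mem_toFinset, hset0] at h0
    rw [Set.Finite.mem_toFinset, hsetm] at hm'
    have := h0.2; have := hm'.2; omega
  rw [hcover, Finset.sum_union hdisj]
  -- pathTerm relations
  have hterm0 : ∀ h ∈ hf0.toFinset, pathTerm qS H Cp h = pathTerm qS H C0 h := by
    intro h _
    unfold pathTerm
    congr 2
    exact Finset.sum_congr rfl fun x _ => by rw [hgp x]
  have htermm : ∀ h ∈ hfm.toFinset, pathTerm qS H Cp h = qS * pathTerm qS H Cm h := by
    intro h hh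
    rw [Set.Finite.mem_toFinset, hsetm] at hh
    have haa : h a ≤ b - 1 := hh.2
    unfold pathTerm
    have hsum : ∑ x ∈ Finset.range m, (Cp.g x - h x) =
        (∑ x ∈ Finset.range m, (Cm.g x - h x)) + 1 := by
      have step : ∀ x ∈ Finset.range m,
          Cp.g x - h x = (Cm.g x - h x) + (if x = a then 1 else 0) := by
        intro x _
        by_cases hxa : x = a
        · subst hxa; rw [hpg, hmg]; simp; omega
        · rw [(hrest x hxa).1]; simp [hxa]
      rw [Finset.sum_congr rfl step, Finset.sum_add_distrib]
      congr 1
      rw [Finset.sum_ite_eq' (Finset.range m) a (fun _ => 1)]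
      simp [Finset.mem_range.mpr ham]
    rw [hsum, pow_succ]
    ring
  rw [Finset.sum_congr rfl hterm0, Finset.sum_congr rfl htermm, Finset.mul_sum]
  ring

/-- Suppose `F` assigns to each monotone curve an element of `R`, satisfying
the skein relation `F_{C₊} = qt·F_{C₋} + F_{C₀}` for every skein triple, and suppose that for
primitive curves the `t = 1` specialization `φ` satisfies
`φ(F_C) = ∑_P q^{area(P_C)-area(P)} h_P`, summed over all lattice paths `P` weakly below `C`.
Then for any monotone curve `C`,
`φ(F_C) = ∑_P q^{area(P_C)-area(P)} h_P`, summed over lattice paths `P` weakly below `C`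
passing through all the lattice points of `C`. -/
theorem stmt14 {R S : Type*} [CommRing R] [CommRing S] (φ : R →+* S)
    (q t : R) (hφt : φ t = 1) (H : ℕ → S) (hH0 : H 0 = 1)
    (F : ∀ m n : ℕ, LCurve m n → R)
    (hskein : ∀ (m n : ℕ) (Cp Cm C0 : LCurve m n) (a b : ℕ), LSkein Cp Cm C0 a b →
      F m n Cp = q * t * F m n Cm + F m n C0)
    (hprim : ∀ (m n : ℕ) (C : LCurve m n), (∀ x, 0 < x → x < m → C.o x = false) →
      φ (F m n C) = ∑ᶠ h ∈ PathsBelow C, pathTerm (φ q) H C h)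
    (m n : ℕ) (C : LCurve m n) :
    φ (F m n C) = ∑ᶠ h ∈ PathsBelowThrough C, pathTerm (φ q) H C h := by
  have main : ∀ (k m n : ℕ) (C : LCurve m n),
      ((Finset.Ioo 0 m).filter fun x => C.o x = true).card = k →
      φ (F m n C) = ∑ᶠ h ∈ PathsBelowThrough C, pathTerm (φ q) H C h := by
    intro k
    induction k with
    | zero =>
      intro m n C hk
      have hall : ∀ x, 0 < x → x < m → C.o x = false := by
        intro x hx0 hxm
        by_contra hcon
        have hx : x ∈ (Finset.Ioo 0 m).filter fun x => C.o x = true := by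
          simp only [Finset.mem_filter, Finset.mem_Ioo]
          exact ⟨⟨hx0, hxm⟩, by revert hcon; cases C.o x <;> simp⟩
        rw [Finset.card_eq_zero.mp hk] at hx
        exact absurd hx (Finset.notMem_empty x)
      have hset : PathsBelowThrough C = PathsBelow C := by
        ext h
        simp only [PathsBelowThrough, Set.mem_setOf_eq]
        refine ⟨fun hh => hh.1, fun hh => ⟨hh, fun x hx0 hxm hox => ?_⟩⟩
        rw [hall x hx0 hxm] at hox
        exact absurd hox Bool.false_ne_true
      rw [hset]
      exact hprim m n C hall
    | succ k ih =>
      intro m n C hk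
      -- pick an interior marked point
      have hne : ((Finset.Ioo 0 m).filter fun x => C.o x = true).Nonempty := by
        rw [← Finset.card_pos, hk]; omega
      obtain ⟨a, ha⟩ := hne
      rw [Finset.mem_filter, Finset.mem_Ioo] at ha
      obtain ⟨⟨ha0, ham⟩, hoa⟩ := ha
      obtain ⟨b, hbdef⟩ : ∃ b, C.g a = b := ⟨_, rfl⟩
      have hm2 : 2 ≤ m := by omega
      -- 0 < b
      have hb0 : 0 < b := by
        have := C.strict (a - 1) (by omega) (by rwa [Nat.sub_add_cancel ha0])
        rw [Nat.sub_add_cancel ha0, hbdef] at this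
        omega
      -- b < n
      have hbn : b < n := by
        have h1 : C.g a ≤ C.g (m - 1) := lc_gle C (by omega) (by omega)
        have h2 := C.strict (m - 1) (by omega) (by rw [Nat.sub_add_cancel (by omega : 1 ≤ m)]; exact C.om)
        rw [Nat.sub_add_cancel (by omega : 1 ≤ m), C.gm] at h2
        rw [hbdef] at h1
        omega
      -- construct Cp and Cm
      let Cp : LCurve m n :=
        { g := C.g
          o := fun x => if x = a then false else C.o x
          mono := C.mono
          strict := by
            intro x hx hox
            by_cases hxa : x + 1 = a
            · rw [if_pos hxa] at hox; exact absurd hox Bool.false_ne_true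
            · rw [if_neg hxa] at hox; exact C.strict x hx hox
          g0 := C.g0
          gm := C.gm
          o0 := by simp only [if_neg (by omega : (0:ℕ) ≠ a)]; exact C.o0
          om := by simp only [if_neg (by omega : m ≠ a)]; exact C.om }
      let Cm : LCurve m n :=
        { g := fun x => if x = a then b - 1 else C.g x
          o := fun x => if x = a then false else C.o x
          mono := by
            intro x hx
            by_cases h1 : x + 1 = a
            · rw [if_pos h1, if_neg (by omega : x ≠ a)]
              have hox1 : C.o (x + 1) = true := by rw [h1]; exact hoa
              have hlt : C.g x < b := by
                rw [← hbdef, ← h1]; exact C.strict x (by omega) hox1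
              omega
            · by_cases h2 : x = a
              · subst h2
                rw [if_neg h1, if_pos rfl]
                have hle : C.g x ≤ C.g (x + 1) := C.mono x hx
                rw [hbdef] at hle
                omega
              · rw [if_neg h1, if_neg h2]; exact C.mono x hx
          strict := by
            intro x hx hox
            by_cases h1 : x + 1 = a
            · rw [if_pos h1] at hox; exact absurd hox Bool.false_ne_true
            · rw [if_neg h1] at hox ⊢
              by_cases h2 : x = a
              · subst h2
                rw [if_pos rfl]
                have hle : C.g x ≤ C.g (x + 1) := C.mono x (by omega)
                rw [hbdef] at hle
                omega
              · rw [if_neg h2]; exact C.strict x hx hox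
          g0 := by simp only [if_neg (by omega : (0:ℕ) ≠ a)]; exact C.g0
          gm := by simp only [if_neg (by omega : m ≠ a)]; exact C.gm
          o0 := by simp only [if_neg (by omega : (0:ℕ) ≠ a)]; exact C.o0
          om := by simp only [if_neg (by omega : m ≠ a)]; exact C.om }
      have hsk : LSkein Cp Cm C a b := by
        refine ⟨ha0, ham, hb0, hbn, hbdef, if_pos rfl, if_pos rfl, if_pos rfl, hbdef, hoa, ?_⟩
        intro x hx
        exact ⟨(if_neg hx).symm, (if_neg hx).symm, rfl, (if_neg hx).symm⟩
      -- counts drop by one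
      have hcount : ∀ (D : LCurve m n), D.o = (fun x => if x = a then false else C.o x) →
          ((Finset.Ioo 0 m).filter fun x => D.o x = true).card = k := by
        intro D hD
        have hfe : ((Finset.Ioo 0 m).filter fun x => D.o x = true) =
            ((Finset.Ioo 0 m).filter fun x => C.o x = true).erase a := by
          ext x
          simp only [Finset.mem_erase, Finset.mem_filter, Finset.mem_Ioo, hD]
          by_cases hx : x = a
          · simp [hx]
          · simp [hx]
        rw [hfe, Finset.card_erase_of_mem (by
          simp only [Finset.mem_filter, Finset.mem_Ioo]; exact ⟨⟨ha0, ham⟩, hoa⟩), hk]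
        omega
      have ihp := ih m n Cp (hcount Cp rfl)
      have ihm := ih m n Cm (hcount Cm rfl)
      -- skein relation
      have hFs := hskein m n Cp Cm C a b hsk
      have hFC : F m n C = F m n Cp - q * t * F m n Cm := by rw [hFs]; ring
      have hφ : φ (F m n C) = φ (F m n Cp) - φ q * φ (F m n Cm) := by
        rw [hFC, map_sub, map_mul, map_mul, hφt, mul_one]
      rw [hφ, ihp, ihm, split_sum (φ q) H Cp Cm C a b hsk]
      ring
  exact main _ m n C rfl
end
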